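/- Let v_k^{(j)} : ℝ → ℝ (1 ≤ j ≤ m, k mod N) be differentiable functions satisfying the Bogoyavlensky equations v̇_k^{(j)} = v_k^{(j)} ( Σ_{i=j+1}^{m} (v_k^{(i)} − v_{k−1}^{(i)}) + Σ_{i=1}^{j−1} (v_{k+1}^{(i)} − v_k^{(i)}) ). Fix j ∈ {1,…,m}, and regard L_j as an N×N matrix over ℝ[λ,λ⁻¹] depending on t through v(t). Then: (a) the strictly positive λ-degree part of L_j equals λ·E, where E = Σ_{k=1}^{N} E_{k+1,k} (cyclic); write L_j = λE + D_j + L_j^−, where D_j is the λ-degree-zero part and L_j^− the strictly negative λ-degree part; (b) for every t, d/dt L_j(t) = [L_j^−(t), L_j(t)] = L_j^−(t)⬝L_j(t) − L_j(t)⬝L_j^−(t), an identity of matrices over ℝ[λ,λ⁻¹]; equivalently, after evaluating at any real λ ≠ 0, dL_j/dt = [L_j, R(L_j)] with R(L_j) = (λE + D_j − L_j^−)/2. -/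

import Mathlib

/-!
Put `G_i = λE + diag(d_i)` with `d_i(k) = Σ_{l ≤ i} v_k^{(l)} + Σ_{l > i} v_{k-1}^{(l)}`. The
equations of motion say exactly that every factor of `L_j` satisfies a Lax equation with these
gauges, `V̇_i = V_i G_{i-1} - G_i V_i` and `U̇_1 = U_1 G_m - G_1 U_1`, so in the product
`L_j = V_j ⋯ V_2 U_1 V_m ⋯ V_{j+1}` the inner gauges cancel and `L̇_j = L_j G_j - G_j L_j`.
Expanding the product in powers of `λ` (each `V_i` is `I + O(λ⁻¹)`) shows that the part of `L_j`
of degree `≥ 0` is `λE + diag(d_j) = G_j`. Hence `G_j = L_j - L_j⁻` and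
`[L_j, G_j] = [L_j⁻, L_j]`.

Time derivatives of matrices over `ℝ[λ,λ⁻¹]` are taken coefficientwise; the Leibniz rule holds
because each factor has its exponents in a fixed finite window.
-/

open Matrix LaurentPolynomial

/-- `U_1 = λ Σ_k E_{k+1,k} + Σ_k v_k^{(1)} E_{kk}` over `ℝ[λ,λ⁻¹]`
(indices cyclic mod N; `v j k` with `j` the 1-based sort index). -/
noncomputable def U1t (N : ℕ) [NeZero N] (v : ℕ → Fin N → ℝ) :
    Matrix (Fin N) (Fin N) (LaurentPolynomial ℝ) :=
  (∑ k : Fin N, Matrix.single (k + 1) k (LaurentPolynomial.T 1))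
    + ∑ k : Fin N, Matrix.single k k (LaurentPolynomial.C (v 1 k))

/-- `V_j = I + λ⁻¹ Σ_k v_k^{(j)} E_{k,k+1}` over `ℝ[λ,λ⁻¹]` (`j` 1-based). -/
noncomputable def Vjt (N : ℕ) [NeZero N] (v : ℕ → Fin N → ℝ) (j : ℕ) :
    Matrix (Fin N) (Fin N) (LaurentPolynomial ℝ) :=
  1 + ∑ k : Fin N,
    Matrix.single k (k + 1) (LaurentPolynomial.C (v j k) * LaurentPolynomial.T (-1))

/-- `L_j = V_j ⬝ ⋯ ⬝ V_2 ⬝ U_1 ⬝ V_m ⬝ ⋯ ⬝ V_{j+1}` over `ℝ[λ,λ⁻¹]` (`j` 1-based). -/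
noncomputable def Ljt (m N : ℕ) [NeZero N] (v : ℕ → Fin N → ℝ) (j : ℕ) :
    Matrix (Fin N) (Fin N) (LaurentPolynomial ℝ) :=
  (((List.range' 2 (j - 1)).reverse.map (Vjt N v)).prod)
    * U1t N v
    * (((List.range' (j + 1) (m - j)).reverse.map (Vjt N v)).prod)

/-- `λE = λ Σ_k E_{k+1,k}` over `ℝ[λ,λ⁻¹]` (indices cyclic mod N). -/
noncomputable def ELmat (N : ℕ) [NeZero N] :
    Matrix (Fin N) (Fin N) (LaurentPolynomial ℝ) :=
  ∑ k : Fin N, Matrix.single (k + 1) k (LaurentPolynomial.T 1)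

namespace LaurentPolynomial

variable {R : Type*} [Semiring R]

theorem coeff_mul_eq_sum_of_support_subset (f g : R[T;T⁻¹]) {S : Finset ℤ}
    (hS : f.coeff.support ⊆ S) (p : ℤ) :
    (f * g).coeff p = ∑ q ∈ S, f.coeff q * g.coeff (p - q) := by
  classical
  rw [AddMonoidAlgebra.coeff_mul, Finsupp.sum_of_support_subset _ hS _ (by simp)]
  refine Finset.sum_congr rfl fun q _ => ?_
  rw [Finsupp.sum, Finset.sum_eq_single (p - q)]
  · simp
  · intro r _ hr
    rw [if_neg (by omega)]
  · intro h
    simp [Finsupp.notMem_support_iff.mp h]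

theorem coeff_mul_eq_sum_Icc {f g : R[T;T⁻¹]} {a b : ℤ} (hf : ∀ q, a < q → f.coeff q = 0)
    (hg : ∀ q, b < q → g.coeff q = 0) (p : ℤ) :
    (f * g).coeff p = ∑ q ∈ Finset.Icc (p - b) a, f.coeff q * g.coeff (p - q) := by
  classical
  rw [coeff_mul_eq_sum_of_support_subset f g
    (Finset.subset_union_left (s₂ := Finset.Icc (p - b) a))]
  refine (Finset.sum_subset Finset.subset_union_right fun q _ hq => ?_).symm
  rw [Finset.mem_Icc, not_and_or, not_le, not_le] at hq
  rcases hq with hq | hq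
  · rw [hg _ (by omega), mul_zero]
  · rw [hf _ hq, zero_mul]

end LaurentPolynomial

namespace Matrix

open LaurentPolynomial

variable {n R : Type*}

section Semiring

variable [Semiring R]

def laurentCoeff (p : ℤ) (X : Matrix n n R[T;T⁻¹]) : Matrix n n R := X.map fun f => f.coeff p

@[simp]
theorem laurentCoeff_apply (p : ℤ) (X : Matrix n n R[T;T⁻¹]) (a b : n) :
    laurentCoeff p X a b = (X a b).coeff p := rfl

@[simp]
theorem laurentCoeff_add (p : ℤ) (X Y : Matrix n n R[T;T⁻¹]) :
    laurentCoeff p (X + Y) = laurentCoeff p X + laurentCoeff p Y := rfl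

variable [Fintype n] in
theorem laurentCoeff_mul_apply (p : ℤ) (X Y : Matrix n n R[T;T⁻¹]) (a b : n) :
    laurentCoeff p (X * Y) a b = ∑ c, (X a c * Y c b).coeff p := by
  simp [mul_apply, AddMonoidAlgebra.coeff_sum]

def LaurentDegreeLE (h : ℤ) (X : Matrix n n R[T;T⁻¹]) : Prop :=
  ∀ a b p, h < p → (X a b).coeff p = 0

theorem LaurentDegreeLE.add {h : ℤ} {X Y : Matrix n n R[T;T⁻¹]} (hX : LaurentDegreeLE h X)
    (hY : LaurentDegreeLE h Y) : LaurentDegreeLE h (X + Y) := fun a b p hp => by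
  simp [AddMonoidAlgebra.coeff_add, hX a b p hp, hY a b p hp]

variable [Fintype n] in
theorem LaurentDegreeLE.mul {h h' : ℤ} {X Y : Matrix n n R[T;T⁻¹]} (hX : LaurentDegreeLE h X)
    (hY : LaurentDegreeLE h' Y) : LaurentDegreeLE (h + h') (X * Y) := fun a b p hp => by
  rw [← laurentCoeff_apply, laurentCoeff_mul_apply]
  refine Finset.sum_eq_zero fun c _ => ?_
  rw [coeff_mul_eq_sum_Icc (hX a c) (hY c b), Finset.Icc_eq_empty (by omega), Finset.sum_empty]

variable [Fintype n] in
theorem laurentCoeff_mul_of_degreeLE {h h' : ℤ} {X Y : Matrix n n R[T;T⁻¹]}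
    (hX : LaurentDegreeLE h X) (hY : LaurentDegreeLE h' Y) :
    laurentCoeff (h + h') (X * Y) = laurentCoeff h X * laurentCoeff h' Y := by
  ext a b
  rw [laurentCoeff_mul_apply, mul_apply]
  refine Finset.sum_congr rfl fun c _ => ?_
  rw [coeff_mul_eq_sum_Icc (hX a c) (hY c b), add_sub_cancel_right, Finset.Icc_self,
    Finset.sum_singleton, add_sub_cancel_left, laurentCoeff_apply, laurentCoeff_apply]

variable [Fintype n] in
theorem laurentCoeff_mul_of_degreeLE_sub_one {h h' : ℤ} {X Y : Matrix n n R[T;T⁻¹]}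
    (hX : LaurentDegreeLE h X) (hY : LaurentDegreeLE h' Y) :
    laurentCoeff (h + h' - 1) (X * Y) =
      laurentCoeff (h - 1) X * laurentCoeff h' Y + laurentCoeff h X * laurentCoeff (h' - 1) Y := by
  ext a b
  rw [laurentCoeff_mul_apply, add_apply, mul_apply, mul_apply, ← Finset.sum_add_distrib]
  refine Finset.sum_congr rfl fun c _ => ?_
  have hIcc : Finset.Icc (h + h' - 1 - h') h = {h - 1, h} := by
    ext q; simp only [Finset.mem_Icc, Finset.mem_insert, Finset.mem_singleton]; omega
  rw [coeff_mul_eq_sum_Icc (hX a c) (hY c b), hIcc, Finset.sum_pair (by omega)]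
  simp only [laurentCoeff_apply]
  congr 3 <;> ring

end Semiring

section CommRing

variable [CommRing R]

noncomputable def laurentMonomial (p : ℤ) (M : Matrix n n R) : Matrix n n R[T;T⁻¹] :=
  (T p : R[T;T⁻¹]) • M.map C

theorem laurentMonomial_apply (p : ℤ) (M : Matrix n n R) (a b : n) :
    laurentMonomial p M a b = C (M a b) * T p := by
  rw [laurentMonomial, smul_apply, map_apply, smul_eq_mul, mul_comm]

theorem coeff_laurentMonomial_apply (p q : ℤ) (M : Matrix n n R) (a b : n) :
    (laurentMonomial p M a b).coeff q = if p = q then M a b else 0 := by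
  rw [laurentMonomial_apply, ← single_eq_C_mul_T, AddMonoidAlgebra.coeff_single,
    Finsupp.single_apply]

@[simp]
theorem laurentCoeff_laurentMonomial (p q : ℤ) (M : Matrix n n R) :
    laurentCoeff q (laurentMonomial p M) = if p = q then M else 0 := by
  ext a b
  rw [laurentCoeff_apply, coeff_laurentMonomial_apply]
  split_ifs <;> rfl

theorem support_coeff_laurentMonomial_apply (p : ℤ) (M : Matrix n n R) (a b : n) :
    (laurentMonomial p M a b).coeff.support ⊆ {p} := by
  rw [laurentMonomial_apply]
  exact support_C_mul_T _ _

theorem support_coeff_laurentMonomial_add_apply (p q : ℤ) (M M' : Matrix n n R) (a b : n) :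
    ((laurentMonomial p M + laurentMonomial q M') a b).coeff.support ⊆ {p, q} := by
  rw [add_apply, AddMonoidAlgebra.coeff_add]
  refine Finsupp.support_add.trans (Finset.union_subset ?_ ?_)
  · exact (support_coeff_laurentMonomial_apply p M a b).trans (by simp)
  · exact (support_coeff_laurentMonomial_apply q M' a b).trans (by simp)

theorem eq_laurentMonomial_zero_of_coeff {X : Matrix n n R[T;T⁻¹]}
    (hX : ∀ a b p, p ≠ 0 → (X a b).coeff p = 0) : X = laurentMonomial 0 (laurentCoeff 0 X) := by
  ext a b p
  rw [coeff_laurentMonomial_apply]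
  split_ifs with hp
  · rw [← hp, laurentCoeff_apply]
  · exact hX a b p (Ne.symm hp)

theorem LaurentDegreeLE.sub_of_laurentCoeff_eq {h : ℤ} {X Y : Matrix n n R[T;T⁻¹]}
    (hX : LaurentDegreeLE (h + 1) X) (hY : LaurentDegreeLE (h + 1) Y)
    (hXY : laurentCoeff (h + 1) X = laurentCoeff (h + 1) Y) : LaurentDegreeLE h (X - Y) := by
  intro a b p hp
  rw [sub_apply, AddMonoidAlgebra.coeff_sub, Finsupp.sub_apply, sub_eq_zero]
  obtain rfl | hp := eq_or_lt_of_le (Int.add_one_le_iff.mpr hp)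
  · exact congrFun (congrFun hXY a) b
  · rw [hX a b p hp, hY a b p hp]

theorem laurentDegreeLE_laurentMonomial {p h : ℤ} (hp : p ≤ h) (M : Matrix n n R) :
    LaurentDegreeLE h (laurentMonomial p M) := fun a b q hq => by
  rw [coeff_laurentMonomial_apply, if_neg (by omega)]

theorem laurentMonomial_add (p : ℤ) (M M' : Matrix n n R) :
    laurentMonomial p (M + M') = laurentMonomial p M + laurentMonomial p M' := by
  rw [laurentMonomial, laurentMonomial, laurentMonomial, Matrix.map_add _ (map_add C), smul_add]

theorem laurentMonomial_sub (p : ℤ) (M M' : Matrix n n R) :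
    laurentMonomial p (M - M') = laurentMonomial p M - laurentMonomial p M' := by
  rw [laurentMonomial, laurentMonomial, laurentMonomial, Matrix.map_sub _ (map_sub C), smul_sub]

@[simp]
theorem laurentMonomial_zero (p : ℤ) : laurentMonomial p (0 : Matrix n n R) = 0 := by
  simp [laurentMonomial]

variable [DecidableEq n]

@[simp]
theorem laurentMonomial_zero_one : laurentMonomial 0 (1 : Matrix n n R) = 1 := by
  simp [laurentMonomial]

@[simp]
theorem laurentCoeff_one (p : ℤ) :
    laurentCoeff p (1 : Matrix n n R[T;T⁻¹]) = if 0 = p then 1 else 0 := by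
  rw [← laurentMonomial_zero_one, laurentCoeff_laurentMonomial]

theorem laurentDegreeLE_one : LaurentDegreeLE 0 (1 : Matrix n n R[T;T⁻¹]) := by
  rw [← laurentMonomial_zero_one]
  exact laurentDegreeLE_laurentMonomial le_rfl 1

variable [Fintype n] in
theorem laurentMonomial_mul_laurentMonomial (p q : ℤ) (M M' : Matrix n n R) :
    laurentMonomial p M * laurentMonomial q M' = laurentMonomial (p + q) (M * M') := by
  rw [laurentMonomial, laurentMonomial, laurentMonomial, smul_mul_smul_comm, ← T_add,
    Matrix.map_mul]

end CommRing

section Deriv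

def HasLaurentDerivAt (F : ℝ → Matrix n n ℝ[T;T⁻¹]) (F' : Matrix n n ℝ[T;T⁻¹]) (t : ℝ) : Prop :=
  ∀ a b p, HasDerivAt (fun s => (F s a b).coeff p) ((F' a b).coeff p) t

variable {F G : ℝ → Matrix n n ℝ[T;T⁻¹]} {F' G' : Matrix n n ℝ[T;T⁻¹]} {t : ℝ}

theorem HasLaurentDerivAt.congr_deriv (hF : HasLaurentDerivAt F F' t) (h : F' = G') :
    HasLaurentDerivAt F G' t := h ▸ hF

theorem hasLaurentDerivAt_const (X : Matrix n n ℝ[T;T⁻¹]) (t : ℝ) :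
    HasLaurentDerivAt (fun _ => X) 0 t := fun _ _ _ => hasDerivAt_const t _

theorem HasLaurentDerivAt.add (hF : HasLaurentDerivAt F F' t) (hG : HasLaurentDerivAt G G' t) :
    HasLaurentDerivAt (fun s => F s + G s) (F' + G') t := fun a b p =>
  (hF a b p).add (hG a b p)

theorem hasLaurentDerivAt_laurentMonomial (p : ℤ) {M : ℝ → Matrix n n ℝ} {M' : Matrix n n ℝ}
    (hM : ∀ a b, HasDerivAt (fun s => M s a b) (M' a b) t) :
    HasLaurentDerivAt (fun s => laurentMonomial p (M s)) (laurentMonomial p M') t := by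
  intro a b q
  simp only [coeff_laurentMonomial_apply]
  split_ifs
  · exact hM a b
  · exact hasDerivAt_const t 0

variable [Fintype n]

/-- The uniform bound `S` on the exponents of `F` keeps every coefficient of `F s * G s` a fixed
finite sum of products. -/
theorem HasLaurentDerivAt.mul {S : Finset ℤ} (hS : ∀ s a b, (F s a b).coeff.support ⊆ S)
    (hF : HasLaurentDerivAt F F' t) (hG : HasLaurentDerivAt G G' t) :
    HasLaurentDerivAt (fun s => F s * G s) (F' * G t + F t * G') t := by
  have hS' : ∀ a b, (F' a b).coeff.support ⊆ S := by
    intro a b q hq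
    by_contra hqS
    have hzero : (fun s => (F s a b).coeff q) = fun _ => 0 :=
      funext fun s => Finsupp.notMem_support_iff.mp fun h => hqS (hS s a b h)
    have hF0 := hF a b q
    rw [hzero] at hF0
    exact Finsupp.mem_support_iff.mp hq (hF0.unique (hasDerivAt_const t 0))
  intro a b p
  have hmul : ∀ X Y : Matrix n n ℝ[T;T⁻¹], (∀ c, (X a c).coeff.support ⊆ S) →
      ((X * Y) a b).coeff p = ∑ c, ∑ q ∈ S, (X a c).coeff q * (Y c b).coeff (p - q) :=
    fun X Y hX => by
      simp only [← laurentCoeff_apply, laurentCoeff_mul_apply,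
        coeff_mul_eq_sum_of_support_subset _ _ (hX _)]
  simp only [hmul _ _ (hS _ a), add_apply, AddMonoidAlgebra.coeff_add, Finsupp.add_apply,
    hmul _ _ (hS' a), ← Finset.sum_add_distrib]
  exact HasDerivAt.fun_sum fun c _ => HasDerivAt.fun_sum fun q _ =>
    (hF a c q).fun_mul (hG c b (p - q))

theorem HasLaurentDerivAt.mul_lax {S : Finset ℤ} {G₀ G₁ G₂ : Matrix n n ℝ[T;T⁻¹]}
    (hS : ∀ s a b, (F s a b).coeff.support ⊆ S)
    (hF : HasLaurentDerivAt F (F t * G₁ - G₀ * F t) t)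
    (hG : HasLaurentDerivAt G (G t * G₂ - G₁ * G t) t) :
    HasLaurentDerivAt (fun s => F s * G s) (F t * G t * G₂ - G₀ * (F t * G t)) t :=
  (hF.mul hS hG).congr_deriv (by noncomm_ring)

end Deriv

end Matrix

namespace Bogoyavlensky

open Matrix LaurentPolynomial Finset

variable {N : ℕ} [NeZero N] {R : Type*} [CommRing R]

def shift : Matrix (Fin N) (Fin N) R := of fun a b => if a = b + 1 then 1 else 0

theorem eq_add_one_iff_eq_sub_one {a b : Fin N} : a = b + 1 ↔ b = a - 1 := by
  rw [eq_sub_iff_add_eq, eq_comm]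

theorem shift_mul_diagonal (d : Fin N → R) :
    shift * diagonal d = diagonal (fun k => d (k - 1)) * shift := by
  ext a b
  simp only [mul_diagonal, diagonal_mul, shift, of_apply, eq_add_one_iff_eq_sub_one]
  split_ifs with h <;> simp [h]

theorem transpose_shift_mul_diagonal (d : Fin N → R) :
    shiftᵀ * diagonal d = diagonal (fun k => d (k + 1)) * shiftᵀ := by
  ext a b
  simp only [mul_diagonal, diagonal_mul, transpose_apply, shift, of_apply]
  split_ifs with h <;> simp [h]

theorem shift_mul_transpose_shift : shift * shiftᵀ = (1 : Matrix (Fin N) (Fin N) R) := by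
  ext a b
  simp [shift, mul_apply, one_apply, eq_add_one_iff_eq_sub_one, eq_comm]

theorem transpose_shift_mul_shift : shiftᵀ * shift = (1 : Matrix (Fin N) (Fin N) R) := by
  ext a b
  simp [shift, mul_apply, one_apply, eq_comm]

noncomputable def uMatrix (d : Fin N → R) : Matrix (Fin N) (Fin N) R[T;T⁻¹] :=
  laurentMonomial 1 shift + laurentMonomial 0 (diagonal d)

noncomputable def vMatrix (w : Fin N → R) : Matrix (Fin N) (Fin N) R[T;T⁻¹] :=
  1 + laurentMonomial (-1) (diagonal w * shiftᵀ)

theorem laurentDegreeLE_vMatrix (w : Fin N → R) : LaurentDegreeLE 0 (vMatrix w) :=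
  laurentDegreeLE_one.add (laurentDegreeLE_laurentMonomial (by norm_num) _)

@[simp]
theorem laurentCoeff_zero_vMatrix (w : Fin N → R) : laurentCoeff 0 (vMatrix w) = 1 := by
  simp [vMatrix]

@[simp]
theorem laurentCoeff_neg_one_vMatrix (w : Fin N → R) :
    laurentCoeff (-1) (vMatrix w) = diagonal w * shiftᵀ := by
  simp [vMatrix]

theorem support_coeff_vMatrix_apply (w : Fin N → R) (a b : Fin N) :
    (vMatrix w a b).coeff.support ⊆ {0, -1} := by
  rw [vMatrix, ← laurentMonomial_zero_one]
  exact support_coeff_laurentMonomial_add_apply _ _ _ _ a b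

theorem laurentDegreeLE_uMatrix (d : Fin N → R) : LaurentDegreeLE 1 (uMatrix d) :=
  (laurentDegreeLE_laurentMonomial le_rfl _).add (laurentDegreeLE_laurentMonomial zero_le_one _)

@[simp]
theorem laurentCoeff_one_uMatrix (d : Fin N → R) : laurentCoeff 1 (uMatrix d) = shift := by
  simp [uMatrix]

@[simp]
theorem laurentCoeff_zero_uMatrix (d : Fin N → R) : laurentCoeff 0 (uMatrix d) = diagonal d := by
  simp [uMatrix]

theorem support_coeff_uMatrix_apply (d : Fin N → R) (a b : Fin N) :
    (uMatrix d a b).coeff.support ⊆ {1, 0} :=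
  support_coeff_laurentMonomial_add_apply _ _ _ _ a b

theorem vMatrix_mul_uMatrix_sub (w d d' : Fin N → R) (h : ∀ k, d' k = d k + w k - w (k - 1)) :
    vMatrix w * uMatrix d - uMatrix d' * vMatrix w =
      laurentMonomial (-1) (diagonal (fun k => w k * (d (k + 1) - d' k)) * shiftᵀ) := by
  have hdeg0 : diagonal d + diagonal w * shiftᵀ * shift - shift * (diagonal w * shiftᵀ)
      - diagonal d' = 0 := by
    rw [mul_assoc, transpose_shift_mul_shift, ← mul_assoc, shift_mul_diagonal, mul_assoc,
      shift_mul_transpose_shift, mul_one, mul_one, diagonal_add, diagonal_sub, diagonal_sub,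
      diagonal_eq_zero]
    funext k
    rw [h k, Pi.zero_apply]
    ring
  have hdeg1 : diagonal w * shiftᵀ * diagonal d - diagonal d' * (diagonal w * shiftᵀ) =
      diagonal (fun k => w k * (d (k + 1) - d' k)) * shiftᵀ := by
    rw [mul_assoc, transpose_shift_mul_diagonal, ← mul_assoc, ← mul_assoc, diagonal_mul_diagonal,
      diagonal_mul_diagonal, ← sub_mul, diagonal_sub]
    congr 2
    funext k
    ring
  calc vMatrix w * uMatrix d - uMatrix d' * vMatrix w
      = laurentMonomial 0 (diagonal d + diagonal w * shiftᵀ * shift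
            - shift * (diagonal w * shiftᵀ) - diagonal d')
        + laurentMonomial (-1) (diagonal w * shiftᵀ * diagonal d
            - diagonal d' * (diagonal w * shiftᵀ)) := by
        simp only [vMatrix, uMatrix, ← laurentMonomial_zero_one, mul_add, add_mul,
          laurentMonomial_mul_laurentMonomial, laurentMonomial_add, laurentMonomial_sub,
          zero_add, add_zero, neg_add_cancel, add_neg_cancel, one_mul, mul_one]
        abel
    _ = _ := by rw [hdeg0, hdeg1, laurentMonomial_zero, zero_add]

theorem uMatrix_mul_uMatrix_sub (w d d' : Fin N → R)
    (h : ∀ k, d' k = d (k - 1) + w k - w (k - 1)) :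
    uMatrix w * uMatrix d - uMatrix d' * uMatrix w =
      laurentMonomial 0 (diagonal (fun k => w k * (d k - d' k))) := by
  have hdeg1 : shift * diagonal d + diagonal w * shift - shift * diagonal w
      - diagonal d' * shift = 0 := by
    rw [shift_mul_diagonal, shift_mul_diagonal, ← add_mul, ← sub_mul, ← sub_mul, diagonal_add,
      diagonal_sub, diagonal_sub]
    convert zero_mul shift
    rw [diagonal_eq_zero]
    funext k
    rw [h k, Pi.zero_apply]
    ring
  have hdeg0 : diagonal w * diagonal d - diagonal d' * diagonal w =
      diagonal (fun k => w k * (d k - d' k)) := by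
    rw [diagonal_mul_diagonal, diagonal_mul_diagonal, diagonal_sub]
    congr 1
    funext k
    ring
  calc uMatrix w * uMatrix d - uMatrix d' * uMatrix w
      = laurentMonomial 1 (shift * diagonal d + diagonal w * shift - shift * diagonal w
            - diagonal d' * shift)
        + laurentMonomial 0 (diagonal w * diagonal d - diagonal d' * diagonal w) := by
        simp only [uMatrix, mul_add, add_mul, laurentMonomial_mul_laurentMonomial,
          laurentMonomial_add, laurentMonomial_sub, zero_add, add_zero]
        abel
    _ = _ := by rw [hdeg0, hdeg1, laurentMonomial_zero, zero_add]

def gaugeDiag (m : ℕ) (w : ℕ → Fin N → R) (i : ℕ) (k : Fin N) : R :=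
  ∑ l ∈ Icc 1 i, w l k + ∑ l ∈ Icc (i + 1) m, w l (k - 1)

def bogoyavlenskyField (m : ℕ) (w : ℕ → Fin N → R) (i : ℕ) (k : Fin N) : R :=
  w i k *
    ((∑ l ∈ Icc (i + 1) m, (w l k - w l (k - 1))) + ∑ l ∈ Icc 1 (i - 1), (w l (k + 1) - w l k))

noncomputable def gauge (m : ℕ) (w : ℕ → Fin N → R) (i : ℕ) : Matrix (Fin N) (Fin N) R[T;T⁻¹] :=
  uMatrix (gaugeDiag m w i)

theorem sum_Icc_eq_add_sum_Icc_succ {a b : ℕ} (h : a ≤ b) (f : ℕ → R) :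
    ∑ l ∈ Icc a b, f l = f a + ∑ l ∈ Icc (a + 1) b, f l := by
  rw [Finset.Icc_add_one_left_eq_Ioc, add_sum_Ioc_eq_sum_Icc h]

section Gauge

variable (m : ℕ) (w : ℕ → Fin N → R)

theorem gaugeDiag_zero (k : Fin N) : gaugeDiag m w 0 k = gaugeDiag m w m (k - 1) := by
  simp [gaugeDiag]

theorem gaugeDiag_succ {i : ℕ} (hi : i + 1 ≤ m) (k : Fin N) :
    gaugeDiag m w (i + 1) k = gaugeDiag m w i k + w (i + 1) k - w (i + 1) (k - 1) := by
  rw [gaugeDiag, gaugeDiag, sum_Icc_succ_top (by omega), sum_Icc_eq_add_sum_Icc_succ hi]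
  ring

theorem bogoyavlenskyField_succ {i : ℕ} (hi : i + 1 ≤ m) (k : Fin N) :
    bogoyavlenskyField m w (i + 1) k =
      w (i + 1) k * (gaugeDiag m w i (k + 1) - gaugeDiag m w (i + 1) k) := by
  rw [bogoyavlenskyField, gaugeDiag, gaugeDiag, add_sub_cancel_right, add_tsub_cancel_right,
    sum_Icc_succ_top (by omega), sum_Icc_eq_add_sum_Icc_succ hi, sum_sub_distrib, sum_sub_distrib]
  ring

variable {m}

theorem vMatrix_mul_gauge_sub {i : ℕ} (hi : i + 1 ≤ m) :
    vMatrix (w (i + 1)) * gauge m w i - gauge m w (i + 1) * vMatrix (w (i + 1)) =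
      laurentMonomial (-1) (diagonal (bogoyavlenskyField m w (i + 1)) * shiftᵀ) := by
  rw [gauge, gauge, vMatrix_mul_uMatrix_sub _ _ _ (gaugeDiag_succ m w hi)]
  congr 3
  funext k
  rw [bogoyavlenskyField_succ m w hi]

theorem uMatrix_mul_gauge_sub (hm : 1 ≤ m) :
    uMatrix (w 1) * gauge m w m - gauge m w 1 * uMatrix (w 1) =
      laurentMonomial 0 (diagonal (bogoyavlenskyField m w 1)) := by
  rw [gauge, gauge, uMatrix_mul_uMatrix_sub _ _ _
    (fun k => by rw [gaugeDiag_succ m w (i := 0) hm, gaugeDiag_zero])]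
  congr 2
  funext k
  rw [bogoyavlenskyField_succ m w (i := 0) hm, gaugeDiag_zero, add_sub_cancel_right]

end Gauge

theorem ELmat_eq_laurentMonomial : ELmat N = laurentMonomial 1 shift := by
  ext a b : 1
  rw [ELmat, Matrix.sum_apply, Finset.sum_eq_single b (fun k _ hk => by simp [single, hk])
    (by simp), laurentMonomial_apply]
  by_cases h : a = b + 1 <;> simp [single, shift, h, eq_comm]

theorem Vjt_eq_vMatrix (w : ℕ → Fin N → ℝ) (i : ℕ) : Vjt N w i = vMatrix (w i) := by
  ext a b : 1
  rw [Vjt, vMatrix, Matrix.add_apply, Matrix.add_apply, Matrix.sum_apply, Finset.sum_eq_single a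
    (fun k _ hk => by simp [single, hk]) (by simp), laurentMonomial_apply, diagonal_mul]
  by_cases h : b = a + 1 <;> simp [single, shift, h, eq_comm]

theorem U1t_eq_uMatrix (w : ℕ → Fin N → ℝ) : U1t N w = uMatrix (w 1) := by
  rw [U1t, uMatrix, ← ELmat, ELmat_eq_laurentMonomial, sum_single_eq_diagonal]
  congr 1
  ext a b : 1
  rw [laurentMonomial_apply, T_zero, mul_one]
  by_cases h : a = b <;> simp [h]

section Dynamics

variable {m : ℕ}

noncomputable def vChain (w : ℕ → Fin N → ℝ) (c n : ℕ) : Matrix (Fin N) (Fin N) ℝ[T;T⁻¹] :=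
  ((List.range' (c + 1) n).reverse.map (Vjt N w)).prod

theorem vChain_zero (w : ℕ → Fin N → ℝ) (c : ℕ) : vChain w c 0 = 1 := rfl

theorem vChain_succ (w : ℕ → Fin N → ℝ) (c n : ℕ) :
    vChain w c (n + 1) = Vjt N w (c + n + 1) * vChain w c n := by
  rw [vChain, List.range'_concat, List.reverse_append, List.reverse_singleton,
    List.singleton_append, List.map_cons, List.prod_cons, one_mul, add_right_comm]
  rfl

theorem Ljt_eq_vChain (w : ℕ → Fin N → ℝ) (j : ℕ) :
    Ljt m N w j = vChain w 1 (j - 1) * U1t N w * vChain w j (m - j) := rfl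

theorem vChain_laurentCoeff (w : ℕ → Fin N → ℝ) (c n : ℕ) :
    LaurentDegreeLE 0 (vChain w c n) ∧ laurentCoeff 0 (vChain w c n) = 1 ∧
      laurentCoeff (-1) (vChain w c n) =
        diagonal (fun k => ∑ i ∈ Icc (c + 1) (c + n), w i k) * shiftᵀ := by
  induction n with
  | zero => exact ⟨laurentDegreeLE_one, by simp [vChain_zero], by simp [vChain_zero]⟩
  | succ n ih =>
    obtain ⟨hdeg, h0, h1⟩ := ih
    have hV := laurentDegreeLE_vMatrix (w (c + n + 1))
    have htop := laurentCoeff_mul_of_degreeLE hV hdeg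
    have hsub := laurentCoeff_mul_of_degreeLE_sub_one hV hdeg
    simp only [add_zero, zero_sub] at htop hsub
    rw [vChain_succ, Vjt_eq_vMatrix]
    refine ⟨by simpa using hV.mul hdeg, ?_, ?_⟩
    · rw [htop, h0, laurentCoeff_zero_vMatrix, one_mul]
    · rw [hsub, h0, h1, laurentCoeff_zero_vMatrix, laurentCoeff_neg_one_vMatrix, one_mul, mul_one,
        ← add_mul, diagonal_add, ← add_assoc]
      congr 2
      funext k
      rw [sum_Icc_succ_top (by omega), add_comm]

theorem Ljt_laurentCoeff (w : ℕ → Fin N → ℝ) {j : ℕ} (hj1 : 1 ≤ j) (hjm : j ≤ m) :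
    LaurentDegreeLE 1 (Ljt m N w j) ∧ laurentCoeff 1 (Ljt m N w j) = shift ∧
      laurentCoeff 0 (Ljt m N w j) = diagonal (gaugeDiag m w j) := by
  obtain ⟨hl, hl0, hl1⟩ := vChain_laurentCoeff w 1 (j - 1)
  obtain ⟨hr, hr0, hr1⟩ := vChain_laurentCoeff w j (m - j)
  have hU := laurentDegreeLE_uMatrix (w 1)
  have hlU : LaurentDegreeLE 1 (vChain w 1 (j - 1) * uMatrix (w 1)) := by simpa using hl.mul hU
  have hlU1 := laurentCoeff_mul_of_degreeLE hl hU
  have hlU0 := laurentCoeff_mul_of_degreeLE_sub_one hl hU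
  have hL1 := laurentCoeff_mul_of_degreeLE hlU hr
  have hL0 := laurentCoeff_mul_of_degreeLE_sub_one hlU hr
  simp only [zero_add, add_zero, sub_self, zero_sub, laurentCoeff_one_uMatrix,
    laurentCoeff_zero_uMatrix, hl0, hl1, hr0, hr1, one_mul, mul_one] at hlU1 hlU0 hL1 hL0
  rw [Ljt_eq_vChain, U1t_eq_uMatrix]
  refine ⟨by simpa using hlU.mul hr, by rw [hL1, hlU1], ?_⟩
  rw [hL0, hlU0, hlU1, mul_assoc, transpose_shift_mul_shift, mul_one, ← mul_assoc,
    shift_mul_diagonal, mul_assoc, shift_mul_transpose_shift, mul_one, diagonal_add, diagonal_add]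
  congr 1
  funext k
  rw [gaugeDiag, sum_Icc_eq_add_sum_Icc_succ hj1, Nat.add_sub_cancel' hj1,
    Nat.add_sub_cancel' hjm, add_comm (w 1 k)]

theorem laurentDegreeLE_Ljt_sub_ELmat (w : ℕ → Fin N → ℝ) {j : ℕ} (hj1 : 1 ≤ j) (hjm : j ≤ m) :
    LaurentDegreeLE 0 (Ljt m N w j - ELmat N) := by
  obtain ⟨hL, hL1, -⟩ := Ljt_laurentCoeff w hj1 hjm
  rw [ELmat_eq_laurentMonomial]
  exact hL.sub_of_laurentCoeff_eq (laurentDegreeLE_laurentMonomial le_rfl _) (by simp [hL1])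

theorem ELmat_add_eq_gauge {w : ℕ → Fin N → ℝ} {j : ℕ} (hj1 : 1 ≤ j) (hjm : j ≤ m)
    {D L : Matrix (Fin N) (Fin N) ℝ[T;T⁻¹]} (hD : ∀ a b p, p ≠ 0 → (D a b).coeff p = 0)
    (hL : ∀ a b p, 0 ≤ p → (L a b).coeff p = 0) (hdecomp : Ljt m N w j = ELmat N + D + L) :
    ELmat N + D = gauge m w j := by
  have hL0 : laurentCoeff 0 L = 0 := by
    ext a b
    exact hL a b 0 le_rfl
  have hD0 : laurentCoeff 0 D = diagonal (gaugeDiag m w j) := by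
    rw [← (Ljt_laurentCoeff w hj1 hjm).2.2, hdecomp]
    simp [ELmat_eq_laurentMonomial, hL0]
  rw [gauge, uMatrix, ELmat_eq_laurentMonomial, eq_laurentMonomial_zero_of_coeff hD, hD0]

variable {t : ℝ}

theorem hasLaurentDerivAt_vMatrix {f : ℝ → Fin N → ℝ} {f' : Fin N → ℝ}
    (hf : ∀ k, HasDerivAt (fun s => f s k) (f' k) t) :
    HasLaurentDerivAt (fun s => vMatrix (f s)) (laurentMonomial (-1) (diagonal f' * shiftᵀ)) t := by
  have h := (hasLaurentDerivAt_const 1 t).add (hasLaurentDerivAt_laurentMonomial (-1)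
    (M := fun s => diagonal (f s) * shiftᵀ) (M' := diagonal f' * shiftᵀ) fun a b => by
      simpa only [diagonal_mul] using (hf a).mul_const _)
  simpa only [vMatrix, zero_add] using h

theorem hasLaurentDerivAt_uMatrix {f : ℝ → Fin N → ℝ} {f' : Fin N → ℝ}
    (hf : ∀ k, HasDerivAt (fun s => f s k) (f' k) t) :
    HasLaurentDerivAt (fun s => uMatrix (f s)) (laurentMonomial 0 (diagonal f')) t := by
  have h := (hasLaurentDerivAt_const (laurentMonomial 1 shift) t).add
    (hasLaurentDerivAt_laurentMonomial 0 (M := fun s => diagonal (f s)) (M' := diagonal f')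
      fun a b => by
        simp only [diagonal_apply]
        split_ifs
        exacts [hf a, hasDerivAt_const t (0 : ℝ)])
  simpa only [uMatrix, zero_add] using h

variable {v : ℝ → ℕ → Fin N → ℝ}
  (hode : ∀ i, 1 ≤ i → i ≤ m → ∀ k,
    HasDerivAt (fun s => v s i k) (bogoyavlenskyField m (v t) i k) t)
include hode

theorem hasLaurentDerivAt_Vjt {i : ℕ} (hi : i + 1 ≤ m) :
    HasLaurentDerivAt (fun s => Vjt N (v s) (i + 1))
      (Vjt N (v t) (i + 1) * gauge m (v t) i - gauge m (v t) (i + 1) * Vjt N (v t) (i + 1)) t := by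
  simp only [Vjt_eq_vMatrix, vMatrix_mul_gauge_sub _ hi]
  exact hasLaurentDerivAt_vMatrix fun k => hode (i + 1) (by omega) hi k

theorem hasLaurentDerivAt_U1t (hm : 1 ≤ m) :
    HasLaurentDerivAt (fun s => U1t N (v s))
      (U1t N (v t) * gauge m (v t) m - gauge m (v t) 1 * U1t N (v t)) t := by
  simp only [U1t_eq_uMatrix, uMatrix_mul_gauge_sub _ hm]
  exact hasLaurentDerivAt_uMatrix fun k => hode 1 le_rfl hm k

theorem hasLaurentDerivAt_vChain_mul {c n a : ℕ} (hcn : c + n ≤ m)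
    {Y : ℝ → Matrix (Fin N) (Fin N) ℝ[T;T⁻¹]}
    (hY : HasLaurentDerivAt Y (Y t * gauge m (v t) a - gauge m (v t) c * Y t) t) :
    HasLaurentDerivAt (fun s => vChain (v s) c n * Y s)
      (vChain (v t) c n * Y t * gauge m (v t) a - gauge m (v t) (c + n) * (vChain (v t) c n * Y t))
      t := by
  induction n with
  | zero => simpa only [vChain_zero, one_mul, add_zero] using hY
  | succ n ih =>
    have h := (hasLaurentDerivAt_Vjt hode (i := c + n) hcn).mul_lax
      (fun s a b => by rw [Vjt_eq_vMatrix]; exact support_coeff_vMatrix_apply _ a b) (ih (by omega))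
    simpa only [vChain_succ, mul_assoc, ← add_assoc] using h

theorem hasLaurentDerivAt_Ljt {j : ℕ} (hj1 : 1 ≤ j) (hjm : j ≤ m) :
    HasLaurentDerivAt (fun s => Ljt m N (v s) j)
      (Ljt m N (v t) j * gauge m (v t) j - gauge m (v t) j * Ljt m N (v t) j) t := by
  have hright := hasLaurentDerivAt_vChain_mul hode (c := j) (n := m - j) (a := j) (by omega)
    ((hasLaurentDerivAt_const 1 t).congr_deriv (by simp))
  rw [Nat.add_sub_cancel' hjm] at hright
  have hmid := (hasLaurentDerivAt_U1t hode (by omega)).mul_lax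
    (fun s a b => by rw [U1t_eq_uMatrix]; exact support_coeff_uMatrix_apply _ a b) hright
  have h := hasLaurentDerivAt_vChain_mul hode (c := 1) (n := j - 1) (by omega) hmid
  rw [Nat.add_sub_cancel' hj1] at h
  simpa only [Ljt_eq_vChain, mul_one, mul_assoc] using h

end Dynamics

end Bogoyavlensky

theorem statement17_general (m N : ℕ) [NeZero N]
    (v : ℝ → ℕ → Fin N → ℝ)
    -- the Bogoyavlensky equations of motion (sorts j are 1-based, sites cyclic mod N)
    (hode : ∀ (j : ℕ), 1 ≤ j → j ≤ m → ∀ (k : Fin N) (t : ℝ),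
      HasDerivAt (fun s => v s j k)
        (v t j k *
          ((∑ i ∈ Finset.Icc (j + 1) m, (v t i k - v t i (k - 1)))
            + ∑ i ∈ Finset.Icc 1 (j - 1), (v t i (k + 1) - v t i k))) t)
    (j : ℕ) (hj1 : 1 ≤ j) (hjm : j ≤ m) :
    -- (a) the strictly positive λ-degree part of L_j equals λE
    (∀ (t : ℝ) (a b : Fin N) (p : ℤ), 0 < p →
      (AddMonoidAlgebra.coeff ((Ljt m N (v t) j - ELmat N) a b)) p = 0)
    -- (b) writing L_j = λE + D_j + L_j⁻ (D_j of λ-degree 0, L_j⁻ of strictly negative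
    -- λ-degree), one has d/dt L_j = [L_j⁻, L_j] = L_j⁻⬝L_j − L_j⬝L_j⁻, as an identity of
    -- matrices over ℝ[λ,λ⁻¹] (read coefficientwise)
    ∧ (∀ Dj Lneg : ℝ → Matrix (Fin N) (Fin N) (LaurentPolynomial ℝ),
        (∀ (t : ℝ) (a b : Fin N) (p : ℤ), p ≠ 0 → (AddMonoidAlgebra.coeff (Dj t a b)) p = 0) →
        (∀ (t : ℝ) (a b : Fin N) (p : ℤ), 0 ≤ p → (AddMonoidAlgebra.coeff (Lneg t a b)) p = 0) →
        (∀ t : ℝ, Ljt m N (v t) j = ELmat N + Dj t + Lneg t) →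
        ∀ (t : ℝ) (a b : Fin N) (p : ℤ),
          HasDerivAt (fun s => (AddMonoidAlgebra.coeff (Ljt m N (v s) j a b)) p)
            ((AddMonoidAlgebra.coeff ((Lneg t * Ljt m N (v t) j - Ljt m N (v t) j * Lneg t) a b)) p) t) := by
  refine ⟨fun t => Bogoyavlensky.laurentDegreeLE_Ljt_sub_ELmat (v t) hj1 hjm, ?_⟩
  intro Dj Lneg hDj hLneg hdecomp t
  have hgauge := Bogoyavlensky.ELmat_add_eq_gauge hj1 hjm (hDj t) (hLneg t) (hdecomp t)
  have hLneg_eq : Lneg t = Ljt m N (v t) j - Bogoyavlensky.gauge m (v t) j := by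
    rw [hdecomp t, ← hgauge]
    abel
  rw [hLneg_eq]
  have hlax := Bogoyavlensky.hasLaurentDerivAt_Ljt (fun i hi1 him k => hode i hi1 him k t) hj1 hjm
  exact hlax.congr_deriv (by noncomm_ring)

theorem statement17 (m N : ℕ) (hm : 2 ≤ m) (hN : 2 ≤ N) [NeZero N]
    (v : ℝ → ℕ → Fin N → ℝ)
    -- the Bogoyavlensky equations of motion (sorts j are 1-based, sites cyclic mod N)
    (hode : ∀ (j : ℕ), 1 ≤ j → j ≤ m → ∀ (k : Fin N) (t : ℝ),
      HasDerivAt (fun s => v s j k)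
        (v t j k *
          ((∑ i ∈ Finset.Icc (j + 1) m, (v t i k - v t i (k - 1)))
            + ∑ i ∈ Finset.Icc 1 (j - 1), (v t i (k + 1) - v t i k))) t)
    (j : ℕ) (hj1 : 1 ≤ j) (hjm : j ≤ m) :
    -- (a) the strictly positive λ-degree part of L_j equals λE
    (∀ (t : ℝ) (a b : Fin N) (p : ℤ), 0 < p →
      (AddMonoidAlgebra.coeff ((Ljt m N (v t) j - ELmat N) a b)) p = 0)
    -- (b) writing L_j = λE + D_j + L_j⁻ (D_j of λ-degree 0, L_j⁻ of strictly negative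
    -- λ-degree), one has d/dt L_j = [L_j⁻, L_j] = L_j⁻⬝L_j − L_j⬝L_j⁻, as an identity of
    -- matrices over ℝ[λ,λ⁻¹] (read coefficientwise)
    ∧ (∀ Dj Lneg : ℝ → Matrix (Fin N) (Fin N) (LaurentPolynomial ℝ),
        (∀ (t : ℝ) (a b : Fin N) (p : ℤ), p ≠ 0 → (AddMonoidAlgebra.coeff (Dj t a b)) p = 0) →
        (∀ (t : ℝ) (a b : Fin N) (p : ℤ), 0 ≤ p → (AddMonoidAlgebra.coeff (Lneg t a b)) p = 0) →
        (∀ t : ℝ, Ljt m N (v t) j = ELmat N + Dj t + Lneg t) →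
        ∀ (t : ℝ) (a b : Fin N) (p : ℤ),
          HasDerivAt (fun s => (AddMonoidAlgebra.coeff (Ljt m N (v s) j a b)) p)
            ((AddMonoidAlgebra.coeff ((Lneg t * Ljt m N (v t) j - Ljt m N (v t) j * Lneg t) a b)) p) t) :=
  statement17_general m N v hode j hj1 hjm
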